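/- The constant function 1 satisfies ℒ1 = −b₁·1, and for every positive integer ℓ the functions φ_±(x) = e^{±2πiℓx} satisfy, for almost every x ∈ I, (ℒφ_±)(x) = (χ₁(κ;ℓ,q)·cosσ − b₁ ∓ i·χ₂(κ;ℓ,q)·sinσ)·φ_±(x). In particular each φ_± is an eigenfunction of ℒ with eigenvalue χ₁(κ;ℓ,q)cosσ − b₁ ∓ iχ₂(κ;ℓ,q)sinσ. -/

import Mathlib

open MeasureTheory Real Set Filter
open scoped ENNReal

noncomputable section

/-- Lebesgue measure restricted to the unit interval `I = [0,1]`. -/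
def muI : Measure ℝ := volume.restrict (Set.Icc (0:ℝ) 1)

/-- The nearest-neighbor graphon `W(x,y) = 1` if `|x-y| ≤ κ` or `|x-y| ≥ 1-κ`, else `0`. -/
def Wnn (κ : ℝ) (x y : ℝ) : ℝ := if |x - y| ≤ κ ∨ |x - y| ≥ 1 - κ then 1 else 0

/-- The linearization operator `ℒ` on `L²(I; ℂ)`, given pointwise:
`(ℒφ)(x) = ∫_I W(x,y) cos(2πq(y−x)+σ)(φ(y)−φ(x)) dy − b₁ φ(x)`. -/
def Lop (κ : ℝ) (q : ℕ) (σ b₁ : ℝ) (φ : ℝ → ℂ) (x : ℝ) : ℂ :=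
  (∫ y in Set.Icc (0:ℝ) 1,
      (Wnn κ x y : ℂ) * (Real.cos (2 * π * q * (y - x) + σ) : ℂ) * (φ y - φ x))
    - (b₁ : ℂ) * φ x

/-- The quantity `χ₁(κ; ℓ, q)`. -/
def chi1 (κ : ℝ) (l q : ℕ) : ℝ :=
  if l = q then
    κ + Real.sin (4 * π * q * κ) / (4 * π * q) - Real.sin (2 * π * q * κ) / (π * q)
  else
    Real.sin (2 * π * ((l:ℝ) - q) * κ) / (2 * π * ((l:ℝ) - q))
      + Real.sin (2 * π * ((l:ℝ) + q) * κ) / (2 * π * ((l:ℝ) + q))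
      - Real.sin (2 * π * q * κ) / (π * q)

/-- The quantity `χ₂(κ; ℓ, q)`. -/
def chi2 (κ : ℝ) (l q : ℕ) : ℝ :=
  if l = q then
    κ - Real.sin (4 * π * q * κ) / (4 * π * q)
  else
    Real.sin (2 * π * ((l:ℝ) - q) * κ) / (2 * π * ((l:ℝ) - q))
      - Real.sin (2 * π * ((l:ℝ) + q) * κ) / (2 * π * ((l:ℝ) + q))

/-! On `[0,1]²` the kernel `W(x,y)` only depends on `x - y` modulo `1`: it is `1` exactly when
`x - y` lies within `κ` of an integer. Against a `1`-periodic integrand, the integral over `[0,1]`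
therefore equals the integral over the window `[x - κ, x + κ]`. For `φ(y) = e^{2πiny}` the integrand
becomes `φ(x) cos(2πqu + σ)(e^{2πinu} - 1)` with `u = y - x`. Writing the cosine as a sum of two
exponentials reduces everything to `∫_{-κ}^{κ} e^{itu} du = 2κ sinc(κt)`, and the two cases in the
definitions of `χ₁`, `χ₂` are the zero and nonzero values of the argument of `sinc`. -/

section

open Complex

lemma integral_exp_ofReal_mul_I_symm (a t : ℝ) :
    ∫ u in -a..a, exp (↑(t * u) * I) = ↑(2 * a * sinc (t * a)) := by
  rcases eq_or_ne t 0 with rfl | ht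
  · simp [two_mul]
  have hsin : t⁻¹ * (2 * Real.sin (t * a)) = 2 * a * sinc (t * a) := by
    rcases eq_or_ne a 0 with rfl | ha
    · simp
    rw [sinc_of_ne_zero (mul_ne_zero ht ha)]
    field_simp
  rw [intervalIntegral.integral_comp_mul_left (fun v : ℝ => exp (↑v * I)) ht, mul_neg,
    integral_exp_mul_I_eq_sin, ← hsin]
  simp

lemma cos_mul_exp_sub_one (p m σ u : ℝ) :
    (Real.cos (2 * π * p * u + σ) : ℂ) * (exp (↑(2 * π * m * u) * I) - 1)
      = exp (σ * I) / 2 * exp (↑(2 * π * (m + p) * u) * I)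
        + exp (↑(-σ) * I) / 2 * exp (↑(2 * π * (m - p) * u) * I)
        - exp (σ * I) / 2 * exp (↑(2 * π * p * u) * I)
        - exp (↑(-σ) * I) / 2 * exp (↑(2 * π * (-p) * u) * I) := by
  rw [ofReal_cos, Complex.cos, div_mul_eq_mul_div]
  simp only [mul_sub, add_mul, div_mul_eq_mul_div, mul_one, ← Complex.exp_add]
  push_cast
  ring_nf

theorem integral_cos_mul_exp_sub_one (a p m σ : ℝ) :
    ∫ u in -a..a, (Real.cos (2 * π * p * u + σ) : ℂ) * (exp (↑(2 * π * m * u) * I) - 1)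
      = ↑(Real.cos σ * (a * (sinc (2 * π * (m + p) * a) + sinc (2 * π * (m - p) * a))
            - 2 * a * sinc (2 * π * p * a)))
        + I * ↑(Real.sin σ * (a * (sinc (2 * π * (m + p) * a) - sinc (2 * π * (m - p) * a)))) := by
  have hexp_int (c : ℂ) (t : ℝ) :
      IntervalIntegrable (fun u : ℝ => c * exp (↑(t * u) * I)) volume (-a) a :=
    (by fun_prop : Continuous fun u : ℝ => c * exp (↑(t * u) * I)).intervalIntegrable _ _
  simp_rw [cos_mul_exp_sub_one]
  rw [intervalIntegral.integral_sub (((hexp_int _ _).add (hexp_int _ _)).sub (hexp_int _ _)) (hexp_int _ _),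
    intervalIntegral.integral_sub ((hexp_int _ _).add (hexp_int _ _)) (hexp_int _ _),
    intervalIntegral.integral_add (hexp_int _ _) (hexp_int _ _)]
  simp only [intervalIntegral.integral_const_mul, integral_exp_ofReal_mul_I_symm]
  simp only [mul_neg, neg_mul, sinc_neg]
  rw [exp_mul_I, exp_mul_I, ← ofReal_cos, ← ofReal_sin, ← ofReal_cos, ← ofReal_sin,
    Real.cos_neg, Real.sin_neg]
  push_cast
  ring

lemma sin_mul_div_eq_mul_sinc {c : ℝ} (hc : c ≠ 0) (a : ℝ) :
    Real.sin (c * a) / c = a * sinc (c * a) := by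
  rcases eq_or_ne a 0 with rfl | ha
  · simp
  rw [sinc_of_ne_zero (mul_ne_zero hc ha)]
  field_simp

lemma chi1_eq_sinc (κ : ℝ) (l : ℕ) {q : ℕ} (hq : q ≠ 0) :
    chi1 κ l q = κ * (sinc (2 * π * (l + q) * κ) + sinc (2 * π * (l - q) * κ))
      - 2 * κ * sinc (2 * π * q * κ) := by
  have hq' : (2 * π * q : ℝ) ≠ 0 := by positivity
  have hsin_q : Real.sin (2 * π * q * κ) / (π * q) = 2 * κ * sinc (2 * π * q * κ) := by
    rw [mul_assoc 2 κ, ← sin_mul_div_eq_mul_sinc hq']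
    field_simp
  rw [chi1, hsin_q]
  split_ifs with hlq
  · subst hlq
    have h4 : (4 * π * l : ℝ) ≠ 0 := by positivity
    rw [sin_mul_div_eq_mul_sinc h4, sub_self, mul_zero, zero_mul, sinc_zero]
    ring_nf
  · have hl_add_q : (2 * π * (l + q) : ℝ) ≠ 0 := by positivity
    have hl_sub_q : (2 * π * (l - q) : ℝ) ≠ 0 :=
      mul_ne_zero (by positivity) (sub_ne_zero.mpr (by exact_mod_cast hlq))
    rw [sin_mul_div_eq_mul_sinc hl_add_q, sin_mul_div_eq_mul_sinc hl_sub_q]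
    ring

lemma chi2_eq_sinc (κ : ℝ) (l : ℕ) {q : ℕ} (hq : q ≠ 0) :
    chi2 κ l q = κ * (sinc (2 * π * (l - q) * κ) - sinc (2 * π * (l + q) * κ)) := by
  rw [chi2]
  split_ifs with hlq
  · subst hlq
    have h4 : (4 * π * l : ℝ) ≠ 0 := by positivity
    rw [sin_mul_div_eq_mul_sinc h4, sub_self, mul_zero, zero_mul, sinc_zero]
    ring_nf
  · have hl_add_q : (2 * π * (l + q) : ℝ) ≠ 0 := by positivity
    have hl_sub_q : (2 * π * (l - q) : ℝ) ≠ 0 :=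
      mul_ne_zero (by positivity) (sub_ne_zero.mpr (by exact_mod_cast hlq))
    rw [sin_mul_div_eq_mul_sinc hl_add_q, sin_mul_div_eq_mul_sinc hl_sub_q]
    ring

lemma Wnn_fract {κ : ℝ} (hκ : 0 ≤ κ) {d : ℝ} (hd : d ∈ Icc (-1) 1) :
    Wnn κ (Int.fract d) 0 = Wnn κ d 0 := by
  obtain ⟨hd₁, hd₂⟩ := hd
  rcases hd₂.lt_or_eq with hd₂ | rfl
  · rcases lt_or_ge d 0 with hneg | hpos
    · have hfract : Int.fract d = d + 1 :=
        Int.fract_eq_iff.mpr ⟨by linarith, by linarith, -1, by push_cast; ring⟩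
      simp only [Wnn, hfract, sub_zero, abs_of_neg hneg, abs_of_nonneg (by linarith : 0 ≤ d + 1)]
      congr 1
      apply propext
      constructor <;> rintro (h | h) <;> first | (left; linarith) | (right; linarith)
    · rw [Int.fract_eq_self.mpr ⟨hpos, hd₂⟩]
  · simp [Wnn, hκ]

lemma measurable_Wnn_left (κ y : ℝ) : Measurable fun x => Wnn κ x y := by
  have hd : Measurable fun x : ℝ => |x - y| := by fun_prop
  exact Measurable.ite ((measurableSet_le hd measurable_const).union
    (measurableSet_le measurable_const hd)) measurable_const measurable_const

theorem setIntegral_Icc_Wnn_mul {κ : ℝ} (hκ₀ : 0 ≤ κ) (hκ : κ ≤ 1 / 2) {x : ℝ}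
    (hx : x ∈ Icc (0 : ℝ) 1) {F : ℝ → ℂ} (hF : Continuous F) (hFper : Function.Periodic F 1) :
    ∫ y in Icc (0 : ℝ) 1, (Wnn κ x y : ℂ) * F y = ∫ y in (x - κ)..(x + κ), F y := by
  set g : ℝ → ℂ := fun y => (Wnn κ (Int.fract (x - y)) 0 : ℂ) * F y with hg
  have hgper : Function.Periodic g 1 := fun y => by
    simp only [hg, hFper y, sub_add_eq_sub_sub, Int.fract_sub_one]
  have hg_int (a b : ℝ) : IntervalIntegrable g volume a b := by
    refine IntervalIntegrable.mul_continuousOn ?_ hF.continuousOn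
    refine (intervalIntegrable_const (c := (1 : ℝ))).mono_fun' ?_ (ae_of_all _ fun y => ?_)
    · exact (measurable_ofReal.comp ((measurable_Wnn_left κ 0).comp
        (measurable_fract.comp (measurable_const.sub measurable_id)))).aestronglyMeasurable
    · simp only [Wnn]
      split_ifs <;> simp
  have hg_eq (y : ℝ) (hy : y ∈ Icc (x - 1) (x + 1)) : g y = (Wnn κ (x - y) 0 : ℂ) * F y := by
    simp only [hg]
    rw [Wnn_fract hκ₀ ⟨by linarith [hy.2], by linarith [hy.1]⟩]
  have hgap : ∫ y in (x - 1 + κ)..(x - κ), g y = 0 := by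
    rw [intervalIntegral.integral_of_le (by linarith), integral_Ioc_eq_integral_Ioo]
    refine setIntegral_eq_zero_of_forall_eq_zero fun y hy => ?_
    rw [hg_eq y ⟨by linarith [hy.1], by linarith [hy.2]⟩, Wnn, if_neg, ofReal_zero, zero_mul]
    rw [sub_zero, abs_of_pos (by linarith [hy.2])]
    rintro (h | h) <;> linarith [hy.1, hy.2]
  have hwindow : ∫ y in (x - κ)..(x + κ), g y = ∫ y in (x - κ)..(x + κ), F y := by
    refine intervalIntegral.integral_congr fun y hy => ?_
    rw [uIcc_of_le (by linarith)] at hy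
    rw [hg_eq y ⟨by linarith [hy.1], by linarith [hy.2]⟩, Wnn, if_pos, ofReal_one, one_mul]
    exact Or.inl (by rw [sub_zero, abs_le]; constructor <;> linarith [hy.1, hy.2])
  calc ∫ y in Icc (0 : ℝ) 1, (Wnn κ x y : ℂ) * F y
      = ∫ y in (0 : ℝ)..1, g y := by
        rw [intervalIntegral.integral_of_le zero_le_one, ← integral_Icc_eq_integral_Ioc]
        refine setIntegral_congr_fun measurableSet_Icc fun y hy => ?_
        rw [hg_eq y ⟨by linarith [hx.2, hy.1], by linarith [hx.1, hy.2]⟩, Wnn, Wnn, sub_zero]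
    _ = ∫ y in (x - 1 + κ)..(x + κ), g y := by
        simpa [sub_add_cancel, add_assoc] using hgper.intervalIntegral_add_eq 0 (x - 1 + κ)
    _ = ∫ y in (x - κ)..(x + κ), F y := by
        rw [← intervalIntegral.integral_add_adjacent_intervals (hg_int _ (x - κ)) (hg_int _ _),
          hgap, hwindow, zero_add]

theorem Lop_exp_int {κ : ℝ} (hκ₀ : 0 ≤ κ) (hκ : κ ≤ 1 / 2) (q : ℕ) (σ b₁ : ℝ) (n : ℤ) {x : ℝ}
    (hx : x ∈ Icc (0 : ℝ) 1) :
    Lop κ q σ b₁ (fun y => exp (↑(2 * π * n * y) * I)) x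
      = (↑(Real.cos σ * (κ * (sinc (2 * π * (n + q) * κ) + sinc (2 * π * (n - q) * κ))
              - 2 * κ * sinc (2 * π * q * κ))) - b₁
          + I * ↑(Real.sin σ * (κ * (sinc (2 * π * (n + q) * κ) - sinc (2 * π * (n - q) * κ)))))
        * exp (↑(2 * π * n * x) * I) := by
  set e : ℝ → ℂ := fun y => exp (↑(2 * π * n * y) * I) with he
  have he_add (u v : ℝ) : e (u + v) = e u * e v := by
    simp only [he, ← Complex.exp_add]
    push_cast
    ring_nf
  have he_per : Function.Periodic e 1 := fun y => by
    have he_one : e 1 = 1 := by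
      rw [he, ← exp_int_mul_two_pi_mul_I n]
      push_cast
      ring_nf
    rw [he_add, he_one, mul_one]
  set F : ℝ → ℂ := fun y => (Real.cos (2 * π * q * (y - x) + σ) : ℂ) * (e y - e x) with hF
  have hF_per : Function.Periodic F 1 := fun y => by
    simp only [hF, he_per y]
    rw [show 2 * π * q * (y + 1 - x) + σ = 2 * π * q * (y - x) + σ + q * (2 * π) by ring,
      Real.cos_add_nat_mul_two_pi]
  have hF_cont : Continuous F := by fun_prop
  calc Lop κ q σ b₁ e x = (∫ y in Icc (0 : ℝ) 1, (Wnn κ x y : ℂ) * F y) - b₁ * e x := by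
        simp only [Lop, hF, mul_assoc]
    _ = (∫ u in -κ..κ, F (u + x)) - b₁ * e x := by
        rw [setIntegral_Icc_Wnn_mul hκ₀ hκ hx hF_cont hF_per,
          intervalIntegral.integral_comp_add_right, neg_add_eq_sub, add_comm κ]
    _ = _ := by
        have hfactor (u : ℝ) : (Real.cos (2 * π * q * u + σ) : ℂ) * (e u * e x - e x)
            = (Real.cos (2 * π * q * u + σ) : ℂ) * (e u - 1) * e x := by ring
        simp only [hF, add_sub_cancel_right, he_add, hfactor, intervalIntegral.integral_mul_const]
        simp only [he]
        rw [integral_cos_mul_exp_sub_one]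
        ring

end

theorem stmt8_general (κ : ℝ) (q : ℕ) (σ b₁ : ℝ)
    (hκ : κ ∈ Set.Ioc (0:ℝ) (1/2)) (hq : 0 < q) :
    (∀ x ∈ Set.Icc (0:ℝ) 1, Lop κ q σ b₁ (fun _ => 1) x = -(b₁:ℂ) * 1) ∧
    (∀ l : ℕ, 0 < l →
      (∀ᵐ x ∂muI,
        Lop κ q σ b₁ (fun y => Complex.exp (Complex.I * (2 * π * l * y))) x
          = (((chi1 κ l q * Real.cos σ - b₁ : ℝ) : ℂ)
              - Complex.I * ((chi2 κ l q * Real.sin σ : ℝ) : ℂ))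
            * Complex.exp (Complex.I * (2 * π * l * x))) ∧
      (∀ᵐ x ∂muI,
        Lop κ q σ b₁ (fun y => Complex.exp (-(Complex.I * (2 * π * l * y)))) x
          = (((chi1 κ l q * Real.cos σ - b₁ : ℝ) : ℂ)
              + Complex.I * ((chi2 κ l q * Real.sin σ : ℝ) : ℂ))
            * Complex.exp (-(Complex.I * (2 * π * l * x))))) := by
  have hx_ae : ∀ᵐ x ∂muI, x ∈ Icc (0 : ℝ) 1 := ae_restrict_mem measurableSet_Icc
  refine ⟨fun x _ => by simp [Lop], fun l _ => ⟨?_, ?_⟩⟩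
  · filter_upwards [hx_ae] with x hx
    have he (y : ℝ) : Complex.exp (Complex.I * (2 * π * l * y))
        = Complex.exp (↑(2 * π * ((l : ℤ) : ℝ) * y) * Complex.I) := by
      push_cast
      ring_nf
    simp only [he]
    rw [Lop_exp_int hκ.1.le hκ.2 q σ b₁ l hx, chi1_eq_sinc κ l hq.ne', chi2_eq_sinc κ l hq.ne']
    push_cast
    ring
  · filter_upwards [hx_ae] with x hx
    have he (y : ℝ) : Complex.exp (-(Complex.I * (2 * π * l * y)))
        = Complex.exp (↑(2 * π * ((-l : ℤ) : ℝ) * y) * Complex.I) := by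
      push_cast
      ring_nf
    simp only [he]
    rw [Lop_exp_int hκ.1.le hκ.2 q σ b₁ (-l) hx, chi1_eq_sinc κ l hq.ne', chi2_eq_sinc κ l hq.ne']
    push_cast
    rw [show 2 * π * (-(l : ℝ) + q) * κ = -(2 * π * (l - q) * κ) by ring,
      show 2 * π * (-(l : ℝ) - q) * κ = -(2 * π * (l + q) * κ) by ring, sinc_neg, sinc_neg]
    ring

/-- `ℒ1 = −b₁·1`, and the exponentials `e^{±2πiℓx}` are eigenfunctions
of `ℒ` with eigenvalues `χ₁(κ;ℓ,q) cos σ − b₁ ∓ i χ₂(κ;ℓ,q) sin σ`. -/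
theorem stmt8 (κ : ℝ) (q : ℕ) (σ b₁ : ℝ)
    (hκ : κ ∈ Set.Ioc (0:ℝ) (1/2)) (hq : 0 < q)
    (hσ : σ ∈ Set.Ioo (-(π/2)) (π/2)) :
    (∀ x ∈ Set.Icc (0:ℝ) 1, Lop κ q σ b₁ (fun _ => 1) x = -(b₁:ℂ) * 1) ∧
    (∀ l : ℕ, 0 < l →
      (∀ᵐ x ∂muI,
        Lop κ q σ b₁ (fun y => Complex.exp (Complex.I * (2 * π * l * y))) x
          = (((chi1 κ l q * Real.cos σ - b₁ : ℝ) : ℂ)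
              - Complex.I * ((chi2 κ l q * Real.sin σ : ℝ) : ℂ))
            * Complex.exp (Complex.I * (2 * π * l * x))) ∧
      (∀ᵐ x ∂muI,
        Lop κ q σ b₁ (fun y => Complex.exp (-(Complex.I * (2 * π * l * y)))) x
          = (((chi1 κ l q * Real.cos σ - b₁ : ℝ) : ℂ)
              + Complex.I * ((chi2 κ l q * Real.sin σ : ℝ) : ℂ))
            * Complex.exp (-(Complex.I * (2 * π * l * x))))) :=
  stmt8_general κ q σ b₁ hκ hq
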